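/- arXiv:1705.08353 — 4 statements merged into one kernel-verified Lean document; each statement's English description precedes it below -/
import Mathlib

section
/- The only integer solutions (t, y) to y² = t⁴ + 6t³ + 13t² + 13t + 4 are (t, y) = (-3, ±1) and (0, ±2). -/
theorem stmt6 (t y : ℤ) :
    y ^ 2 = t ^ 4 + 6 * t ^ 3 + 13 * t ^ 2 + 13 * t + 4 ↔
      (t = -3 ∧ (y = 1 ∨ y = -1)) ∨ (t = 0 ∧ (y = 2 ∨ y = -2)) := by
  constructor
  · intro h
    rcases le_or_gt t (-4) with ht | ht
    · exfalso
      have hm : 0 ≤ t ^ 2 + 3 * t + 1 := by nlinarith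
      have h1 : (t ^ 2 + 3 * t + 1) ^ 2 < y ^ 2 := by nlinarith
      have h2 : y ^ 2 < (t ^ 2 + 3 * t + 2) ^ 2 := by nlinarith
      have ha : t ^ 2 + 3 * t + 1 < |y| :=
        lt_of_pow_lt_pow_left₀ 2 (abs_nonneg y) (by rw [sq_abs]; exact h1)
      have hb : |y| < t ^ 2 + 3 * t + 2 :=
        lt_of_pow_lt_pow_left₀ 2 (by linarith) (by rw [sq_abs]; exact h2)
      have := Int.add_one_le_of_lt ha
      linarith
    rcases le_or_gt 1 t with ht2 | ht2
    · exfalso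
      have hm : 0 ≤ t ^ 2 + 3 * t + 2 := by nlinarith
      have h1 : (t ^ 2 + 3 * t + 2) ^ 2 < y ^ 2 := by nlinarith
      have h2 : y ^ 2 < (t ^ 2 + 3 * t + 3) ^ 2 := by nlinarith
      have ha : t ^ 2 + 3 * t + 2 < |y| :=
        lt_of_pow_lt_pow_left₀ 2 (abs_nonneg y) (by rw [sq_abs]; exact h1)
      have hb : |y| < t ^ 2 + 3 * t + 3 :=
        lt_of_pow_lt_pow_left₀ 2 (by linarith) (by rw [sq_abs]; exact h2)
      have := Int.add_one_le_of_lt ha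
      linarith
    have ht3 : -3 ≤ t := by omega
    have ht4 : t ≤ 0 := by omega
    interval_cases t
    · have h1 : (y - 1) * (y + 1) = 0 := by nlinarith
      rcases mul_eq_zero.mp h1 with h2 | h2
      · exact Or.inl ⟨rfl, Or.inl (by omega)⟩
      · exact Or.inl ⟨rfl, Or.inr (by omega)⟩
    · exfalso; nlinarith [sq_nonneg y]
    · exfalso; nlinarith [sq_nonneg y]
    · have h1 : (y - 2) * (y + 2) = 0 := by nlinarith
      rcases mul_eq_zero.mp h1 with h2 | h2
      · exact Or.inr ⟨rfl, Or.inl (by omega)⟩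
      · exact Or.inr ⟨rfl, Or.inr (by omega)⟩
  · rintro (⟨rfl, rfl | rfl⟩ | ⟨rfl, rfl | rfl⟩) <;> norm_num
end

section
/- The only integer solutions (t, y) to -y² = t⁴ + 6t³ + 13t² + 13t + 4 are (t, y) = (-1, ±1). -/
theorem stmt7 (t y : ℤ) :
    -y ^ 2 = t ^ 4 + 6 * t ^ 3 + 13 * t ^ 2 + 13 * t + 4 ↔
      (t = -1 ∧ (y = 1 ∨ y = -1)) := by
  constructor
  · intro h
    have hy := sq_nonneg y
    have h1 : t ≥ -2 := by
      by_contra hc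
      push_neg at hc
      have ht : t ≤ -3 := by omega
      have hu : t ^ 2 + 3 * t + 2 ≥ 2 := by nlinarith [mul_nonneg (by omega : (0:ℤ) ≤ -t) (by omega : (0:ℤ) ≤ -(t+3))]
      have h2u : 2 * t ^ 2 + 7 * t + 4 ≥ 1 := by nlinarith [mul_nonneg (by omega : (0:ℤ) ≤ -(2*t+1)) (by omega : (0:ℤ) ≤ -(t+3))]
      nlinarith [mul_nonneg (by linarith : (0:ℤ) ≤ t ^ 2 + 3 * t + 2 - 2) (by linarith : (0:ℤ) ≤ t ^ 2 + 3 * t + 2)]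
    have h2 : t ≤ -1 := by
      by_contra hc
      push_neg at hc
      have ht : t ≥ 0 := by omega
      nlinarith [sq_nonneg (t ^ 2 + 3 * t + 2)]
    interval_cases t
    · exfalso
      have h2 : y ^ 2 = 2 := by linarith
      have hb1 : y ≤ 1 := by nlinarith
      have hb2 : -1 ≤ y := by nlinarith
      interval_cases y <;> norm_num at h2
    · refine ⟨rfl, ?_⟩
      have h2 : y ^ 2 = 1 := by linarith
      have hb1 : y ≤ 1 := by nlinarith
      have hb2 : -1 ≤ y := by nlinarith
      interval_cases y <;> omega
  · rintro ⟨rfl, rfl | rfl⟩ <;> norm_num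
end

section
/- Let K be a field of characteristic ≠ 2 and φ(x) = (x-γ)² + c ∈ K[x]. If -φ(γ) and φ²(γ) are both nonsquares in K and their product -φ(γ)·φ²(γ) is a nonsquare in K, then φ²(x) is irreducible over K. -/
open Polynomial

private lemma monic_quad_eq {K : Type*} [Field K] {g : K[X]} (hm : g.Monic)
    (hd : g.natDegree = 2) :
    g = X ^ 2 + C (g.coeff 1) * X + C (g.coeff 0) := by
  ext n
  have h2 : g.coeff 2 = 1 := by
    have := hm.leadingCoeff
    rwa [leadingCoeff, hd] at this
  match n with
  | 0 => simp
  | 1 => simp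
  | 2 => simp [h2, coeff_X_pow]
  | (n+3) =>
    have : g.coeff (n+3) = 0 := coeff_eq_zero_of_natDegree_lt (by omega)
    simp [this, coeff_X_pow, coeff_C]

private lemma biquad_irred {K : Type*} [Field K] (hchar : (2 : K) ≠ 0) (a c : K)
    (h1 : ¬ IsSquare (-c)) (h2 : ¬ IsSquare (a ^ 2 + c)) :
    Irreducible (X ^ 4 + C (2 * a) * X ^ 2 + C (a ^ 2 + c) : K[X]) := by
  set F : K[X] := X ^ 4 + C (2 * a) * X ^ 2 + C (a ^ 2 + c) with hF
  have hmon : F.Monic := by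
    rw [hF]
    monicity!
  have hdegF : F.natDegree = 4 := by
    rw [hF]
    compute_degree!
  -- no root
  have hnoroot : ∀ r : K, F.eval r ≠ 0 := by
    intro r hr
    apply h1
    refine ⟨r ^ 2 + a, ?_⟩
    simp only [hF, eval_add, eval_mul, eval_pow, eval_C, eval_X] at hr
    linear_combination -hr
  -- no monic quadratic factor
  have hnoquad : ∀ g : K[X], g.Monic → g.natDegree = 2 → ¬ g ∣ F := by
    intro g hgm hgd ⟨h, hgh⟩
    have hg0 : g ≠ 0 := hgm.ne_zero
    have hF0 : F ≠ 0 := hmon.ne_zero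
    have hh0 : h ≠ 0 := by rintro rfl; simp [hgh] at hF0
    have hlc : h.leadingCoeff = 1 := by
      have := congrArg leadingCoeff hgh
      rw [hmon.leadingCoeff, leadingCoeff_mul, hgm.leadingCoeff, one_mul] at this
      exact this.symm
    have hhm : h.Monic := hlc
    have hhd : h.natDegree = 2 := by
      have := congrArg natDegree hgh
      rw [hdegF, natDegree_mul hg0 hh0, hgd] at this
      omega
    set a1 := g.coeff 1; set b1 := g.coeff 0
    set a2 := h.coeff 1; set b2 := h.coeff 0
    have hgeq := monic_quad_eq hgm hgd
    have hheq := monic_quad_eq hhm hhd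
    rw [hgeq, hheq] at hgh
    have hexp : (X ^ 2 + C a1 * X + C b1) * (X ^ 2 + C a2 * X + C b2) =
        X ^ 4 + C (a1 + a2) * X ^ 3 + C (b1 + b2 + a1 * a2) * X ^ 2
          + C (a1 * b2 + a2 * b1) * X + C (b1 * b2) := by
      simp only [C_add, C_mul]; ring
    rw [hexp] at hgh
    have e3 : (0 : K) = a1 + a2 := by
      have := congrArg (fun p => coeff p 3) hgh
      simp only [hF, coeff_add, coeff_C_mul, coeff_X_pow, coeff_X, coeff_C] at this
      norm_num at this
      linear_combination this
    have e2 : 2 * a = b1 + b2 + a1 * a2 := by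
      have := congrArg (fun p => coeff p 2) hgh
      simp only [hF, coeff_add, coeff_C_mul, coeff_X_pow, coeff_X, coeff_C] at this
      norm_num at this
      linear_combination this
    have e1 : (0 : K) = a1 * b2 + a2 * b1 := by
      have := congrArg (fun p => coeff p 1) hgh
      simp only [hF, coeff_add, coeff_C_mul, coeff_X_pow, coeff_X, coeff_C] at this
      norm_num at this
      linear_combination this
    have e0 : a ^ 2 + c = b1 * b2 := by
      have := congrArg (fun p => coeff p 0) hgh
      simp only [hF, coeff_add, coeff_C_mul, coeff_X_pow, coeff_X, coeff_C] at this
      norm_num at this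
      linear_combination this
    have ha2 : a2 = -a1 := by linear_combination -e3
    have key : a1 * (b2 - b1) = 0 := by linear_combination -e1 - b1 * ha2
    rcases mul_eq_zero.mp key with ha1 | hb
    · -- a1 = 0 : b1 + b2 = 2a, b1*b2 = a^2+c gives -c square
      apply h1
      refine ⟨(b1 - b2) / 2, ?_⟩
      field_simp
      linear_combination (b1 + b2 + 2 * a) * e2 - 4 * e0 - (b1 + b2 + 2 * a) * a2 * ha1 - (b1 + b2 + 2 * a) * a1 * ha2 + (3 * b1 * a2 + b1 * a1 + 3 * b2 * a2 + b2 * a1 + 6 * a * a2 + 2 * a * a1) * ha1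
    · -- b2 = b1 : b1^2 = a^2+c square
      apply h2
      refine ⟨b1, ?_⟩
      have hb' : b2 = b1 := by linear_combination hb
      rw [e0, hb']
  -- assemble irreducibility
  constructor
  · intro hu
    have := natDegree_eq_zero_of_isUnit hu
    omega
  · intro g h hgh
    by_contra hcon
    push_neg at hcon
    obtain ⟨hgu, hhu⟩ := hcon
    have hF0 : F ≠ 0 := hmon.ne_zero
    have hg0 : g ≠ 0 := by rintro rfl; simp [hgh] at hF0
    have hh0 : h ≠ 0 := by rintro rfl; simp [hgh] at hF0
    have hsum : g.natDegree + h.natDegree = 4 := by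
      have := congrArg natDegree hgh
      rw [hdegF, natDegree_mul hg0 hh0] at this
      omega
    have hgpos : 0 < g.natDegree := by
      rcases Nat.eq_zero_or_pos g.natDegree with h' | h'
      · exfalso
        apply hgu
        rw [eq_C_of_natDegree_eq_zero h']
        exact isUnit_C.mpr (isUnit_iff_ne_zero.mpr (fun h0 => hg0 (by
          rw [eq_C_of_natDegree_eq_zero h', h0, map_zero])))
      · exact h'
    have hhpos : 0 < h.natDegree := by
      rcases Nat.eq_zero_or_pos h.natDegree with h' | h'
      · exfalso
        apply hhu
        rw [eq_C_of_natDegree_eq_zero h']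
        exact isUnit_C.mpr (isUnit_iff_ne_zero.mpr (fun h0 => hh0 (by
          rw [eq_C_of_natDegree_eq_zero h', h0, map_zero])))
      · exact h'
    -- get a divisor d of F with natDegree 1 or 2
    have hdvd : ∃ d : K[X], d ∣ F ∧ (d.natDegree = 1 ∨ d.natDegree = 2) := by
      rcases le_or_gt g.natDegree 2 with hle | hlt
      · exact ⟨g, ⟨h, hgh⟩, by omega⟩
      · exact ⟨h, ⟨g, by rw [hgh]; ring⟩, by omega⟩
    obtain ⟨d, hd, hdeg⟩ := hdvd
    have hd0 : d ≠ 0 := by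
      rintro rfl
      simp at hdeg
    set d' : K[X] := d * C d.leadingCoeff⁻¹ with hd'
    have hd'm : d'.Monic := monic_mul_leadingCoeff_inv hd0
    have hlcne : d.leadingCoeff ≠ 0 := leadingCoeff_ne_zero.mpr hd0
    have hdd : d = d' * C d.leadingCoeff := by
      rw [hd', mul_assoc, ← C_mul, inv_mul_cancel₀ hlcne, C_1, mul_one]
    have hd'dvd : d' ∣ F := dvd_trans ⟨C d.leadingCoeff, hdd⟩ hd
    have hd'deg : d'.natDegree = d.natDegree := by
      rw [hd', natDegree_mul_C (inv_ne_zero (leadingCoeff_ne_zero.mpr hd0))]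
    rcases hdeg with h1' | h2'
    · -- linear factor gives a root
      have : d' = X + C (d'.coeff 0) := by
        have := hd'm.eq_X_add_C (by omega : d'.natDegree = 1)
        exact this
      rw [this] at hd'dvd
      have : F.eval (-(d'.coeff 0)) = 0 := by
        have hdvd2 : (X - C (-(d'.coeff 0))) ∣ F := by
          simpa [sub_neg_eq_add] using hd'dvd
        exact (dvd_iff_isRoot.mp hdvd2)
      exact hnoroot _ this
    · exact hnoquad d' hd'm (by omega) hd'dvd

/-- Stoll/Jones square criterion for irreducibility of the second iterate: if
`-φ(γ)`, `φ²(γ)` and their product `-φ(γ)·φ²(γ)` are all nonsquares in a field `K`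
of characteristic `≠ 2`, where `φ(x) = (x-γ)² + c`, then `φ²` is irreducible over `K`. -/
theorem stmt15 {K : Type*} [Field K] (hchar : (2 : K) ≠ 0) (γ c : K)
    (φ : K[X]) (hφ : φ = (X - C γ) ^ 2 + C c)
    (h1 : ¬ IsSquare (-(φ.eval γ)))
    (h2 : ¬ IsSquare ((φ.comp φ).eval γ))
    (h3 : ¬ IsSquare (-(φ.eval γ) * (φ.comp φ).eval γ)) :
    Irreducible (φ.comp φ) := by
  have hevγ : φ.eval γ = c := by simp [hφ]
  have hev2 : (φ.comp φ).eval γ = (c - γ) ^ 2 + c := by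
    simp [hφ, eval_comp]
  rw [hevγ] at h1
  rw [hev2] at h2
  set F : K[X] := X ^ 4 + C (2 * (c - γ)) * X ^ 2 + C ((c - γ) ^ 2 + c) with hF
  have hFirr : Irreducible F := biquad_irred hchar (c - γ) c h1 h2
  have hcomp : φ.comp φ = (algEquivAevalXAddC (-γ)) F := by
    rw [hφ, hF]
    simp only [algEquivAevalXAddC_apply, map_add, map_mul, map_pow, map_sub, aeval_X,
      aeval_C, algebraMap_eq, add_comp, sub_comp, pow_comp, X_comp, C_comp]
    simp only [map_neg, map_add, map_sub, map_mul, map_pow, map_ofNat]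
    ring
  rw [hcomp]
  exact (MulEquiv.irreducible_iff (algEquivAevalXAddC (-γ)).toMulEquiv).mpr hFirr
end

section
/- The abelianization of the automorphism group of the binary rooted tree with m levels is isomorphic to (ℤ/2ℤ)^m. Equivalently, the abelianization of the m-fold iterated wreath product of ℤ/2ℤ with itself is (ℤ/2ℤ)^m. -/
/-- `u` and `v` agree on their first `i` coordinates. -/
def agreesTo (m : ℕ) (u v : Fin m → Bool) (i : ℕ) : Prop :=
  ∀ j : Fin m, (j : ℕ) < i → u j = v j

/-- The automorphism group of the complete binary rooted tree of depth `m`, realized as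
the group of permutations of the leaves (binary strings of length `m`) preserving the
depth of common prefixes. -/
def treeAut (m : ℕ) : Subgroup (Equiv.Perm (Fin m → Bool)) where
  carrier := {σ | ∀ u v i, agreesTo m u v i ↔ agreesTo m (σ u) (σ v) i}
  one_mem' := by intro u v i; rfl
  mul_mem' := by
    intro a b ha hb u v i
    simpa [Equiv.Perm.mul_apply] using (hb u v i).trans (ha (b u) (b v) i)
  inv_mem' := by
    intro a ha u v i
    simpa [Equiv.Perm.mul_apply] using (ha (a⁻¹ u) (a⁻¹ v) i).symm

/-!
For `σ` in `treeAut m` and `i < m`, let `levelSign σ i ∈ ℤˣ` be the sign of the permutation that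
`σ` induces on the `2^(i+1)` vertices of depth `i + 1`. This is a homomorphism to an abelian
group, and it is the abelianization map; both halves go by induction on the depth through
`treeAut (m + 1) = (treeAut m × treeAut m) ⋊ ℤ/2`. An element `(τ₀, τ₁)` of the base group has
level signs `(1, levelSign τ₀ * levelSign τ₁)`, and an element with sign `1` at the root lies in
the base group. Conjugation by the root flip exchanges the two factors, so modulo commutators
`(τ₀, τ₁) ≡ (1, τ₀ τ₁)`, and if `(τ₀, τ₁)` has trivial level signs then so does `τ₀ τ₁`. The root
flip has sign `-1` at the root, which gives surjectivity.
-/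

open Equiv Equiv.Perm Function

lemma Equiv.Perm.eq_one_of_card_eq_two_of_sign_eq_one {α : Type*} [Fintype α] [DecidableEq α]
    (hα : Fintype.card α = 2) {π : Perm α} (h : sign π = 1) : π = 1 := by
  by_contra hπ
  have hsupp : π.support.card = 2 :=
    le_antisymm (hα ▸ π.support.card_le_univ) (two_le_card_support_of_ne_one hπ)
  rw [(card_support_eq_two.1 hsupp).sign_eq] at h
  exact absurd h (by decide)

namespace TreeAut

noncomputable section

variable {m k : ℕ}

lemma agreesTo_zero (u v : Fin m → Bool) : agreesTo m u v 0 :=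
  fun _ h => absurd h (Nat.not_lt_zero _)

lemma agreesTo_cons_succ {a b : Bool} {u v : Fin m → Bool} :
    agreesTo (m + 1) (Fin.cons a u) (Fin.cons b v) (k + 1) ↔ a = b ∧ agreesTo m u v k := by
  simp [agreesTo, Fin.forall_fin_succ]

lemma agreesTo_iff_take_eq (hk : k ≤ m) {u v : Fin m → Bool} :
    agreesTo m u v k ↔ Fin.take k hk u = Fin.take k hk v :=
  ⟨fun h => funext fun j => h _ j.2, fun h j hj => congrFun h ⟨j, hj⟩⟩

lemma perm_ext_cons {σ τ : Perm (Fin (m + 1) → Bool)}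
    (h : ∀ a w, σ (Fin.cons a w) = τ (Fin.cons a w)) : σ = τ :=
  Equiv.ext fun u => Fin.consCases h u

/-- The element `(g; f)` of the wreath product `Perm (Fin m → Bool) ≀ Perm Bool`. -/
def wreathPerm (g : Perm Bool) (f : Bool → Perm (Fin m → Bool)) : Perm (Fin (m + 1) → Bool) :=
  (Fin.consEquiv fun _ => Bool).permCongr (prodShear g f)

@[simp]
lemma wreathPerm_cons (g : Perm Bool) (f : Bool → Perm (Fin m → Bool)) (a : Bool)
    (w : Fin m → Bool) : wreathPerm g f (Fin.cons a w) = Fin.cons (g a) (f a w) := by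
  simp [wreathPerm, permCongr_apply, Fin.consEquiv, prodShear]

lemma wreathPerm_mem_treeAut_iff {g : Perm Bool} {f : Bool → Perm (Fin m → Bool)} :
    wreathPerm g f ∈ treeAut (m + 1) ↔ ∀ a, f a ∈ treeAut m := by
  refine ⟨fun h a u v k => ?_, fun hf u v k => ?_⟩
  · simpa [agreesTo_cons_succ] using h (Fin.cons a u) (Fin.cons a v) (k + 1)
  · induction u using Fin.consCases with | cons a w => ?_
    induction v using Fin.consCases with | cons b w' => ?_
    cases k with
    | zero => simp [agreesTo_zero]
    | succ k =>
      simp only [wreathPerm_cons, agreesTo_cons_succ, g.injective.eq_iff]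
      by_cases hab : a = b
      · subst hab
        simpa using hf a w w' k
      · simp [hab]

lemma take_surjective (hk : k ≤ m) :
    Surjective (Fin.take k hk : (Fin m → Bool) → Fin k → Bool) :=
  (Fin.castLE_injective hk).surjective_comp_right

lemma take_cons_succ (hk : k ≤ m) (a : Bool) (w : Fin m → Bool) :
    Fin.take (k + 1) (Nat.succ_le_succ hk) (Fin.cons a w : Fin (m + 1) → Bool) =
      Fin.cons a (Fin.take k hk w) := by
  ext i
  induction i using Fin.cases <;> simp [Fin.castLE_succ]

lemma take_apply_eq_of_take_eq (hk : k ≤ m) (σ : treeAut m) {u v : Fin m → Bool}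
    (h : Fin.take k hk u = Fin.take k hk v) : Fin.take k hk (σ.1 u) = Fin.take k hk (σ.1 v) := by
  rw [← agreesTo_iff_take_eq] at h ⊢
  exact (σ.2 u v k).1 h

/-- The action of `σ` on the vertices of depth `k` (words of length `k`), read off from an
arbitrary leaf below the vertex. -/
def levelMap (hk : k ≤ m) (σ : treeAut m) (p : Fin k → Bool) : Fin k → Bool :=
  Fin.take k hk (σ.1 (surjInv (take_surjective hk) p))

@[simp]
lemma levelMap_take (hk : k ≤ m) (σ : treeAut m) (u : Fin m → Bool) :
    levelMap hk σ (Fin.take k hk u) = Fin.take k hk (σ.1 u) :=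
  take_apply_eq_of_take_eq hk σ (surjInv_eq _ _)

def levelPerm (hk : k ≤ m) (σ : treeAut m) : Perm (Fin k → Bool) where
  toFun := levelMap hk σ
  invFun := levelMap hk σ⁻¹
  left_inv := (take_surjective hk).forall.2 fun u => by simp
  right_inv := (take_surjective hk).forall.2 fun u => by simp

@[simp]
lemma levelPerm_take (hk : k ≤ m) (σ : treeAut m) (u : Fin m → Bool) :
    levelPerm hk σ (Fin.take k hk u) = Fin.take k hk (σ.1 u) :=
  levelMap_take hk σ u

lemma levelPerm_ext (hk : k ≤ m) {π π' : Perm (Fin k → Bool)}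
    (h : ∀ u : Fin m → Bool, π (Fin.take k hk u) = π' (Fin.take k hk u)) : π = π' :=
  Equiv.ext ((take_surjective hk).forall.2 h)

def levelHom (hk : k ≤ m) : treeAut m →* Perm (Fin k → Bool) where
  toFun := levelPerm hk
  map_one' := levelPerm_ext hk fun u => by simp
  map_mul' σ τ := levelPerm_ext hk fun u => by simp

def levelSign : treeAut m →* (Fin m → ℤˣ) :=
  MonoidHom.pi fun i => sign.comp (levelHom (k := i + 1) i.isLt)

lemma levelSign_apply (σ : treeAut m) (i : Fin m) :
    levelSign σ i = sign (levelPerm i.isLt σ) := by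
  rfl

def branchHom : (Bool → treeAut m) →* treeAut (m + 1) where
  toFun f := ⟨wreathPerm 1 fun a => (f a).1, wreathPerm_mem_treeAut_iff.2 fun a => (f a).2⟩
  map_one' := Subtype.ext <| perm_ext_cons fun a w => by simp
  map_mul' f f' := Subtype.ext <| perm_ext_cons fun a w => by simp

@[simp]
lemma branchHom_cons (f : Bool → treeAut m) (a : Bool) (w : Fin m → Bool) :
    (branchHom f).1 (Fin.cons a w) = Fin.cons a ((f a).1 w) := by
  simp [branchHom]

def rootFlip : treeAut (m + 1) :=
  ⟨wreathPerm boolNot 1, wreathPerm_mem_treeAut_iff.2 fun _ => one_mem _⟩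

@[simp]
lemma rootFlip_cons (a : Bool) (w : Fin m → Bool) :
    (rootFlip : treeAut (m + 1)).1 (Fin.cons a w) = Fin.cons (!a) w := by
  simp [rootFlip]

lemma rootFlip_mul_branchHom (f : Bool → treeAut m) :
    rootFlip * branchHom f = branchHom (f ∘ not) * rootFlip :=
  Subtype.ext <| perm_ext_cons fun a w => by simp

lemma of_branchHom_comp_not (f : Bool → treeAut m) :
    Abelianization.of (branchHom (f ∘ not)) = Abelianization.of (branchHom f) := by
  have h := congrArg Abelianization.of (rootFlip_mul_branchHom f)
  rw [map_mul, map_mul, mul_comm] at h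
  exact (mul_right_cancel h).symm

lemma levelPerm_branchHom (hk : k ≤ m) (f : Bool → treeAut m) :
    levelPerm (Nat.succ_le_succ hk) (branchHom f) =
      (Fin.consEquiv fun _ => Bool).permCongr (prodCongrRight fun a => levelPerm hk (f a)) := by
  refine levelPerm_ext (Nat.succ_le_succ hk) fun u => ?_
  induction u using Fin.consCases with | cons a w => ?_
  rw [levelPerm_take, branchHom_cons, take_cons_succ hk, take_cons_succ hk]
  simp [permCongr_apply, Fin.consEquiv]

lemma levelSign_branchHom (f : Bool → treeAut m) :
    levelSign (branchHom f) = Fin.cons 1 (∏ a, levelSign (f a)) := by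
  ext1 i
  induction i using Fin.cases with
  | zero =>
    change sign (levelPerm (Nat.succ_le_succ (Nat.zero_le m)) (branchHom f)) = 1
    rw [levelPerm_branchHom (Nat.zero_le m), sign_permCongr, sign_prodCongrRight]
    simp [Subsingleton.elim _ (1 : Perm (Fin 0 → Bool))]
  | succ i =>
    change sign (levelPerm (Nat.succ_le_succ i.isLt) (branchHom f)) = _
    rw [levelPerm_branchHom i.isLt, sign_permCongr, sign_prodCongrRight]
    simp [levelSign_apply]

lemma apply_zero_eq_of_levelSign_zero {σ : treeAut (m + 1)} (h : levelSign σ 0 = 1)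
    (u : Fin (m + 1) → Bool) : σ.1 u 0 = u 0 := by
  rw [levelSign_apply] at h
  have hπ := eq_one_of_card_eq_two_of_sign_eq_one (by simp) h
  have := congrFun (levelPerm_take (0 : Fin (m + 1)).isLt σ u) 0
  rw [hπ] at this
  exact this.symm

lemma exists_branchHom_eq {σ : treeAut (m + 1)} (hσ : ∀ u, σ.1 u 0 = u 0) :
    ∃ f, branchHom f = σ := by
  have hcons : ∀ a w, σ.1 (Fin.cons a w) = Fin.cons a (Fin.tail (σ.1 (Fin.cons a w))) :=
    fun a w => by conv_lhs => rw [← Fin.cons_self_tail (σ.1 _), hσ, Fin.cons_zero]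
  let r a : Perm (Fin m → Bool) := Equiv.ofBijective (fun w => Fin.tail (σ.1 (Fin.cons a w)))
    (Finite.injective_iff_bijective.1 fun w w' h => by
      apply Fin.cons_right_injective (α := fun _ => Bool) a
      apply σ.1.injective
      rw [hcons a w, hcons a w', h])
  have hσr : σ.1 = wreathPerm 1 r := perm_ext_cons fun a w => (hcons a w).trans (by simp [r])
  have hr := wreathPerm_mem_treeAut_iff.1 (hσr ▸ σ.2)
  exact ⟨fun a => ⟨r a, hr a⟩, Subtype.ext (perm_ext_cons fun a w => by simp [hσr])⟩

lemma of_branchHom (f : Bool → treeAut m) :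
    Abelianization.of (branchHom f) =
      Abelianization.map (branchHom.comp (MonoidHom.mulSingle (fun _ => treeAut m) true))
        (Abelianization.of (f true * f false)) := by
  have hf : f = Pi.mulSingle true (f true) * Pi.mulSingle false (f false) := by
    funext a; cases a <;> simp
  have hflip : Pi.mulSingle false (f false) = Pi.mulSingle true (f false) ∘ not := by
    funext a; cases a <;> simp
  rw [Abelianization.map_of, MonoidHom.comp_apply, map_mul, MonoidHom.mulSingle_apply,
    MonoidHom.mulSingle_apply, map_mul, map_mul,
    ← of_branchHom_comp_not (Pi.mulSingle true (f false)), ← hflip, ← map_mul, ← map_mul, ← hf]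

theorem of_eq_one_of_levelSign_eq_one :
    ∀ {m : ℕ} {σ : treeAut m}, levelSign σ = 1 → Abelianization.of σ = 1
  | 0, σ, _ => by rw [Subsingleton.elim σ 1, map_one]
  | m + 1, σ, h => by
    obtain ⟨f, rfl⟩ := exists_branchHom_eq (apply_zero_eq_of_levelSign_zero (congrFun h 0))
    have hf : levelSign (f true * f false) = 1 := by
      have := congrArg Fin.tail h
      rwa [levelSign_branchHom, Fin.tail_cons, Fintype.prod_bool, ← map_mul] at this
    rw [of_branchHom, of_eq_one_of_levelSign_eq_one hf, map_one]

lemma levelSign_rootFlip_zero : levelSign (rootFlip : treeAut (m + 1)) 0 = -1 :=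
  (Int.units_eq_one_or _).resolve_left fun h => by
    simpa using apply_zero_eq_of_levelSign_zero h (Fin.cons false fun _ => false)

theorem levelSign_surjective : ∀ {m : ℕ}, Surjective (levelSign (m := m))
  | 0 => fun y => ⟨1, Subsingleton.elim _ _⟩
  | m + 1 => by
    have hcons (y : Fin (m + 1) → ℤˣ) (hy : y 0 = 1) : y ∈ levelSign.range := by
      obtain ⟨τ, hτ⟩ := levelSign_surjective (Fin.tail y)
      refine ⟨branchHom (Pi.mulSingle true τ), ?_⟩
      rw [levelSign_branchHom, Fintype.prod_bool]
      simp [hτ, ← hy]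
    intro y
    rcases Int.units_eq_one_or (y 0) with hy | hy
    · exact hcons y hy
    · have := mul_mem (MonoidHom.mem_range.2 ⟨rootFlip, rfl⟩)
        (hcons (levelSign rootFlip⁻¹ * y) (by simp [levelSign_rootFlip_zero, hy]))
      simpa using this

def abelianizationMulEquiv (m : ℕ) : Abelianization (treeAut m) ≃* (Fin m → ℤˣ) :=
  MulEquiv.ofBijective (Abelianization.lift levelSign)
    ⟨(injective_iff_map_eq_one _).2 fun a ha => by
      induction a using QuotientGroup.induction_on with
      | H σ => exact of_eq_one_of_levelSign_eq_one ha,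
    fun y => let ⟨σ, hσ⟩ := levelSign_surjective y; ⟨Abelianization.of σ, hσ⟩⟩

end

end TreeAut

/-- The abelianization of the automorphism group of the binary rooted tree with `m`
levels is isomorphic to `(ℤ/2ℤ)^m`. -/
theorem stmt17 (m : ℕ) :
    Nonempty (Abelianization (treeAut m) ≃* (Fin m → Multiplicative (ZMod 2))) :=
  ⟨(TreeAut.abelianizationMulEquiv m).trans <|
    MulEquiv.piCongrRight fun _ => mulEquivOfPrimeCardEq (p := 2) (by simp) (by simp)⟩
end
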